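/- As c → 1 from the left, the expression (16c²/(π·(1−c²)^{3/2}))·arctan(√((1−c)/(1+c))) − 8c/(π·(1−c²)) + 1 − ((8/(π·√(1−c²)))·arctan(√((1−c)/(1+c))) − 1)² tends to 16/(3π) − 16/π². Equivalently, the variance of the StableQAT gradient surrogate remains bounded and converges to 16/(3π) − 16/π² as the surrogate sharpens toward the rounding function. -/

import Mathlib

/-!
Substitute `c = cos s` with `s = arccos c ∈ (0, π)`: then `√(1 - c²) = sin s` and
`arctan √((1 - c)/(1 + c)) = s/2`, so the expression becomes a combination of `cos s`,
`s / sin s` and `(s cos s - sin s) / s³`. As `c → 1⁻` we have `s → 0⁺`, where these tend to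
`1`, `1` and `-1/3` (the last by L'Hôpital), giving `-8/(3π) + 1 - (4/π - 1)²`.
-/

open Real Filter Topology

namespace Real

lemma arctan_sqrt_one_sub_div_one_add {c : ℝ} (h₁ : -1 < c) (h₂ : c ≤ 1) :
    arctan √((1 - c) / (1 + c)) = arccos c / 2 := by
  set s := arccos c
  have hs₀ : 0 ≤ s := arccos_nonneg c
  have hsπ : s < π := arccos_lt_pi.mpr h₁
  have hcos : cos s = c := cos_arccos h₁.le h₂
  have htan : tan (s / 2) = √((1 - c) / (1 + c)) := by
    rw [tan_eq_sin_div_cos, sin_half_eq_sqrt hs₀ (by linarith), cos_half (by linarith) hsπ.le,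
      hcos, ← sqrt_div (by linarith), div_div_div_cancel_right₀ two_ne_zero]
  rw [← htan, arctan_tan (by linarith) (by linarith)]

lemma tendsto_mul_cos_sub_sin_div_pow_three :
    Tendsto (fun s : ℝ => (s * cos s - sin s) / s ^ 3) (𝓝[≠] 0) (𝓝 (-(1 / 3))) := by
  have hderiv (s : ℝ) : HasDerivAt (fun s => s * cos s - sin s) (-(s * sin s)) s :=
    (((hasDerivAt_id' s).mul (hasDerivAt_cos s)).sub (hasDerivAt_sin s)).congr_deriv (by ring)
  refine HasDerivAt.lhopital_zero_nhdsNE (Eventually.of_forall hderiv)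
    (Eventually.of_forall fun s => by simpa using hasDerivAt_pow 3 s)
    (eventually_nhdsWithin_of_forall fun s hs => by simpa using hs) ?_ ?_ ?_
  · exact tendsto_nhdsWithin_of_tendsto_nhds
      (by simpa using (by fun_prop : Continuous fun s : ℝ => s * cos s - sin s).tendsto 0)
  · exact tendsto_nhdsWithin_of_tendsto_nhds (by simpa using (continuous_pow 3).tendsto (0 : ℝ))
  · have hsinc : Tendsto (fun s => -sinc s / 3) (𝓝[≠] 0) (𝓝 (-(1 / 3))) := by
      simpa [neg_div] using
        ((continuous_sinc.tendsto 0).neg.div_const 3).mono_left nhdsWithin_le_nhds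
    refine hsinc.congr' (eventually_nhdsWithin_of_forall fun s hs => ?_)
    rw [sinc_of_ne_zero hs]
    field_simp

lemma tendsto_arccos_nhdsLT_one : Tendsto arccos (𝓝[<] 1) (𝓝[>] 0) :=
  tendsto_nhdsWithin_of_tendsto_nhds_of_eventually_within _
    (by simpa using continuous_arccos.continuousWithinAt (s := Set.Iio 1) (x := 1) |>.tendsto)
    (eventually_nhdsWithin_of_forall fun _ hc => arccos_pos.mpr hc)

end Real

noncomputable def surrogateVariance (c : ℝ) : ℝ :=
  (16 * c ^ 2 / (π * (1 - c ^ 2) ^ ((3 : ℝ) / 2))) * arctan √((1 - c) / (1 + c)) -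
    8 * c / (π * (1 - c ^ 2)) + 1 -
    ((8 / (π * √(1 - c ^ 2))) * arctan √((1 - c) / (1 + c)) - 1) ^ 2

/-- `surrogateVariance (cos s)`, with `s / sin s` written as `(sinc s)⁻¹` so that every factor
is continuous at `s = 0`. -/
noncomputable def surrogateVarianceOfAngle (s : ℝ) : ℝ :=
  8 / π * cos s * ((s * cos s - sin s) / s ^ 3) / sinc s ^ 3 + 1 - (4 / π / sinc s - 1) ^ 2

lemma surrogateVariance_eq_ofAngle_arccos {c : ℝ} (h₁ : -1 < c) (h₂ : c < 1) :
    surrogateVariance c = surrogateVarianceOfAngle (arccos c) := by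
  have hc : 0 < 1 - c ^ 2 := by nlinarith
  rw [surrogateVariance, surrogateVarianceOfAngle, sinc_of_ne_zero (arccos_pos.mpr h₂).ne',
    sin_arccos, cos_arccos h₁.le h₂.le, arctan_sqrt_one_sub_div_one_add h₁ h₂.le,
    rpow_div_two_eq_sqrt _ hc.le]
  have hsq := sq_sqrt hc.le
  have hu := (sqrt_pos.mpr hc).ne'
  have hs := (arccos_pos.mpr h₂).ne'
  generalize √(1 - c ^ 2) = u at hsq hu ⊢
  generalize arccos c = s at hs ⊢
  rw [← hsq]
  norm_cast
  field_simp
  ring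

lemma tendsto_surrogateVarianceOfAngle :
    Tendsto surrogateVarianceOfAngle (𝓝[≠] 0) (𝓝 (16 / (3 * π) - 16 / π ^ 2)) := by
  have hcos : Tendsto cos (𝓝[≠] 0) (𝓝 1) := by
    simpa using (continuous_cos.tendsto 0).mono_left nhdsWithin_le_nhds
  have hsinc : Tendsto sinc (𝓝[≠] 0) (𝓝 1) := by
    simpa using (continuous_sinc.tendsto 0).mono_left nhdsWithin_le_nhds
  have h := (((hcos.const_mul (8 / π)).mul tendsto_mul_cos_sub_sin_div_pow_three).div
    (hsinc.pow 3) (by norm_num)).add_const 1 |>.sub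
    (((tendsto_const_nhds (x := 4 / π)).div hsinc one_ne_zero).sub_const 1 |>.pow 2)
  rwa [show 16 / (3 * π) - 16 / π ^ 2 = 8 / π * 1 * -(1 / 3) / 1 ^ 3 + 1 - (4 / π / 1 - 1) ^ 2 by
    field_simp; ring]

theorem stableqat_variance_limit :
    Tendsto
      (fun c : ℝ =>
        (16 * c ^ 2 / (Real.pi * (1 - c ^ 2) ^ ((3 : ℝ) / 2))) *
          Real.arctan (Real.sqrt ((1 - c) / (1 + c))) -
        8 * c / (Real.pi * (1 - c ^ 2)) + 1 -
        ((8 / (Real.pi * Real.sqrt (1 - c ^ 2))) *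
          Real.arctan (Real.sqrt ((1 - c) / (1 + c))) - 1) ^ 2)
      (nhdsWithin 1 (Set.Iio 1))
      (nhds (16 / (3 * Real.pi) - 16 / Real.pi ^ 2)) := by
  change Tendsto surrogateVariance (𝓝[<] 1) _
  have hlim := tendsto_surrogateVarianceOfAngle.comp
    (tendsto_arccos_nhdsLT_one.mono_right (nhdsWithin_mono 0 fun _ hs => ne_of_gt hs))
  refine hlim.congr' ?_
  filter_upwards [Ioo_mem_nhdsLT (show (-1 : ℝ) < 1 by norm_num)] with c hc
  exact (surrogateVariance_eq_ofAngle_arccos hc.1 hc.2).symm
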